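/- Let h : ℝ^{2n} → ℂ be a smooth function. Then Σ_{|α| = 2} (∂^α h)(0) · (1/α!) · ∫_{ℂ^n} 𝒫(0, w) · W^α · 𝒫(w, 0) dW = (1/π) Σ_{i=1}^n (∂²h/∂z_i ∂z̄_i)(0), where the sum on the left runs over all multi-indices α ∈ ℕ^{2n} with |α| = 2, ∂^α denotes iterated partial derivatives in the real coordinates Z_1, …, Z_{2n}, and W^α is the corresponding monomial in the real coordinates of w. -/

import Mathlib

open MeasureTheory Complex

noncomputable section

/-- The Wirtinger derivative `∂/∂z_j` of a function on `ℂⁿ ≅ ℝ^{2n}`. -/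
def wirtingerD {n : ℕ} (j : Fin n) (f : (Fin n → ℂ) → ℂ) (z : Fin n → ℂ) : ℂ :=
  (1 / 2) * (fderiv ℝ f z (Pi.single j 1) - Complex.I * fderiv ℝ f z (Pi.single j Complex.I))

/-- The Wirtinger derivative `∂/∂z̄_j` of a function on `ℂⁿ ≅ ℝ^{2n}`. -/
def wirtingerDBar {n : ℕ} (j : Fin n) (f : (Fin n → ℂ) → ℂ) (z : Fin n → ℂ) : ℂ :=
  (1 / 2) * (fderiv ℝ f z (Pi.single j 1) + Complex.I * fderiv ℝ f z (Pi.single j Complex.I))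

/-- The creation operator `b_j = -2 ∂/∂z_j + π z̄_j`. -/
def bOp {n : ℕ} (j : Fin n) (f : (Fin n → ℂ) → ℂ) : (Fin n → ℂ) → ℂ :=
  fun z => -2 * wirtingerD j f z + (Real.pi : ℂ) * (starRingEnd ℂ) (z j) * f z

/-- The annihilation operator `b_j⁺ = 2 ∂/∂z̄_j + π z_j`. -/
def bPlusOp {n : ℕ} (j : Fin n) (f : (Fin n → ℂ) → ℂ) : (Fin n → ℂ) → ℂ :=
  fun z => 2 * wirtingerDBar j f z + (Real.pi : ℂ) * z j * f z

/-- The Gaussian `exp(-(π/2) Σ |z_i|²)`. -/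
def gaussFn {n : ℕ} (z : Fin n → ℂ) : ℂ :=
  Complex.exp (-((Real.pi : ℂ) / 2) * ∑ i, (Complex.normSq (z i) : ℂ))

/-- The iterated operator `b^α = b_1^{α_1} ∘ ⋯ ∘ b_n^{α_n}`. -/
def bPow {n : ℕ} (α : Fin n → ℕ) (f : (Fin n → ℂ) → ℂ) : (Fin n → ℂ) → ℂ :=
  (List.ofFn (fun j : Fin n => (bOp j)^[α j])).foldr (· ∘ ·) id f

/-- The eigenfunctions `f_{α,β} = b^α (z^β exp(-(π/2) Σ |z_i|²))` of the model operator. -/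
def eigFun {n : ℕ} (α β : Fin n → ℕ) : (Fin n → ℂ) → ℂ :=
  bPow α (fun z => (∏ j, z j ^ β j) * gaussFn z)

/-- The model Bergman kernel `𝒫(z,w) = exp(-(π/2) Σ (|z_j|² + |w_j|² - 2 z_j w̄_j))`. -/
def bergK {n : ℕ} (z w : Fin n → ℂ) : ℂ :=
  Complex.exp (-((Real.pi : ℂ) / 2) *
    ∑ j, ((Complex.normSq (z j) : ℂ) + (Complex.normSq (w j) : ℂ)
            - 2 * z j * (starRingEnd ℂ) (w j)))

/-- `F : ℂⁿ × ℂⁿ → ℂ` is a polynomial function in the underlying real coordinates, equivalently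
a polynomial in the coordinates `z_i, z̄_i` of the first argument and `z'_i, z̄'_i` of the
second one. -/
def IsPolyKernel {n : ℕ} (F : (Fin n → ℂ) → (Fin n → ℂ) → ℂ) : Prop :=
  ∃ p : MvPolynomial (Fin n ⊕ Fin n ⊕ Fin n ⊕ Fin n) ℂ,
    ∀ z z' : Fin n → ℂ,
      F z z' = MvPolynomial.eval
        (Sum.elim (fun i => z i) (Sum.elim (fun i => (starRingEnd ℂ) (z i))
          (Sum.elim (fun i => z' i) (fun i => (starRingEnd ℂ) (z' i))))) p

/-- Under the identification `ℝ^{2n} ≅ ℂⁿ`, `z_j = Z_{2j-1} + i Z_{2j}`, the direction in `ℂⁿ`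
corresponding to the `j`-th real coordinate `Z_j`. -/
def coordDir {n : ℕ} (j : Fin (2 * n)) : Fin n → ℂ :=
  Pi.single ⟨j.val / 2, by have := j.isLt; omega⟩ (if j.val % 2 = 0 then 1 else Complex.I)

/-- The `j`-th real coordinate of `w ∈ ℂⁿ ≅ ℝ^{2n}`, viewed as a complex number. -/
def realCoordC {n : ℕ} (j : Fin (2 * n)) (w : Fin n → ℂ) : ℂ :=
  if j.val % 2 = 0 then ((w ⟨j.val / 2, by have := j.isLt; omega⟩).re : ℂ)
  else ((w ⟨j.val / 2, by have := j.isLt; omega⟩).im : ℂ)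

/-- The partial derivative `∂/∂Z_j` in the `j`-th real coordinate of `ℂⁿ ≅ ℝ^{2n}`. -/
def realPDeriv {n : ℕ} (j : Fin (2 * n)) (f : (Fin n → ℂ) → ℂ) (z : Fin n → ℂ) : ℂ :=
  fderiv ℝ f z (coordDir j)

/-- The iterated partial derivative `∂^α` in the real coordinates of `ℂⁿ ≅ ℝ^{2n}`,
for a multi-index `α ∈ ℕ^{2n}`. -/
def iterD {n : ℕ} (α : Fin (2 * n) → ℕ) (f : (Fin n → ℂ) → ℂ) : (Fin n → ℂ) → ℂ :=
  (List.ofFn (fun j : Fin (2 * n) =>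
    (fun (g : (Fin n → ℂ) → ℂ) (z : Fin n → ℂ) => fderiv ℝ g z (coordDir j))^[α j])).foldr
    (· ∘ ·) id f


/-! ### Auxiliary lemmas -/

section Aux

open Real

lemma mom0 : ∫ x : ℝ, Real.exp (-π * x ^ 2) = 1 := by
  rw [integral_gaussian, div_self pi_ne_zero, Real.sqrt_one]

lemma mom1 : ∫ x : ℝ, x * Real.exp (-π * x ^ 2) = 0 := by
  have h := integral_neg_eq_self (fun x : ℝ => x * Real.exp (-π * x ^ 2)) volume
  simp only [neg_sq, neg_mul, integral_neg] at h
  simp only [neg_mul]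
  linarith

lemma mom2 : ∫ x : ℝ, x ^ 2 * Real.exp (-π * x ^ 2) = 1 / (2 * π) := by
  have h1 : ∫ x : ℝ, |x| ^ 2 * Real.exp (-π * |x| ^ 2)
      = 2 * ∫ x in Set.Ioi (0:ℝ), x ^ 2 * Real.exp (-π * x ^ 2) :=
    integral_comp_abs (f := fun t => t ^ 2 * Real.exp (-π * t ^ 2))
  simp only [_root_.sq_abs] at h1
  have h2 := _root_.integral_rpow_mul_exp_neg_mul_rpow (p := 2) (q := 2) (by norm_num)
    (by norm_num) pi_pos
  have h2' : ∫ x in Set.Ioi (0:ℝ), x ^ (2:ℝ) * Real.exp (-π * x ^ (2:ℝ))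
      = ∫ x in Set.Ioi (0:ℝ), x ^ 2 * Real.exp (-π * x ^ 2) := by
    refine setIntegral_congr_fun measurableSet_Ioi fun x hx => ?_
    rw [show (2:ℝ) = ((2:ℕ):ℝ) by norm_num, Real.rpow_natCast]
  rw [h2'] at h2
  have hG : Real.Gamma (((2:ℝ) + 1) / 2) = π ^ ((1:ℝ)/2) / 2 := by
    rw [show ((2:ℝ) + 1) / 2 = 1/2 + 1 by norm_num, Real.Gamma_add_one (by norm_num),
      Real.Gamma_one_half_eq, Real.sqrt_eq_rpow]
    ring
  have key : π ^ (-((2:ℝ) + 1) / 2) * π ^ ((1:ℝ)/2) = π⁻¹ := by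
    rw [← Real.rpow_add pi_pos]
    norm_num [Real.rpow_neg_one]
  calc ∫ x : ℝ, x ^ 2 * Real.exp (-π * x ^ 2)
      = 2 * (π ^ (-((2:ℝ) + 1) / 2) * (1 / 2) * Real.Gamma (((2:ℝ) + 1) / 2)) := by
        rw [h1, h2]
    _ = (π ^ (-((2:ℝ) + 1) / 2) * π ^ ((1:ℝ)/2)) / 2 := by rw [hG]; ring
    _ = 1 / (2 * π) := by rw [key]; rw [one_div, mul_inv]; ring

lemma momC (a : ℕ) : ∫ x : ℝ, (x:ℂ) ^ a * (Real.exp (-π * x ^ 2) : ℂ)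
    = ((∫ x : ℝ, x ^ a * Real.exp (-π * x ^ 2) : ℝ) : ℂ) := by
  calc ∫ x : ℝ, (x:ℂ) ^ a * (Real.exp (-π * x ^ 2) : ℂ)
      = ∫ x : ℝ, ((x ^ a * Real.exp (-π * x ^ 2) : ℝ) : ℂ) := by norm_num
    _ = _ := integral_ofReal

lemma intC (a b : ℕ) : ∫ z : ℂ, ((z.re : ℂ)) ^ a * ((z.im : ℂ)) ^ b
      * (Real.exp (-π * Complex.normSq z) : ℂ)
    = ((∫ x : ℝ, x ^ a * Real.exp (-π * x ^ 2) : ℝ) : ℂ)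
      * ((∫ x : ℝ, x ^ b * Real.exp (-π * x ^ 2) : ℝ) : ℂ) := by
  rw [← ((Complex.volume_preserving_equiv_real_prod.symm
    Complex.measurableEquivRealProd).integral_comp' (fun z : ℂ => ((z.re : ℂ)) ^ a
      * ((z.im : ℂ)) ^ b * (Real.exp (-π * Complex.normSq z) : ℂ)))]
  have : ∀ p : ℝ × ℝ, ((Complex.measurableEquivRealProd.symm p).re : ℂ) ^ a
      * ((Complex.measurableEquivRealProd.symm p).im : ℂ) ^ b
      * (Real.exp (-π * Complex.normSq (Complex.measurableEquivRealProd.symm p)) : ℂ)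
      = ((p.1 : ℂ) ^ a * (Real.exp (-π * p.1 ^ 2) : ℂ))
        * ((p.2 : ℂ) ^ b * (Real.exp (-π * p.2 ^ 2) : ℂ)) := by
    intro p
    have h1 : Complex.measurableEquivRealProd.symm p = ⟨p.1, p.2⟩ := rfl
    rw [h1]
    simp only [Complex.normSq_mk]
    rw [show -π * (p.1 * p.1 + p.2 * p.2) = -π * p.1 ^ 2 + -π * p.2 ^ 2 by ring,
      Real.exp_add]
    push_cast
    ring
  simp only [this]
  rw [MeasureTheory.Measure.volume_eq_prod,
    MeasureTheory.integral_prod_mul (f := fun x : ℝ => (x:ℂ) ^ a * (Real.exp (-π * x ^ 2) : ℂ))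
      (g := fun x : ℝ => (x:ℂ) ^ b * (Real.exp (-π * x ^ 2) : ℂ)),
    momC a, momC b]

def pairE (n : ℕ) : Fin n × Fin 2 ≃ Fin (2 * n) :=
  finProdFinEquiv.trans (finCongr (Nat.mul_comm n 2))

lemma pairE_val {n : ℕ} (i : Fin n) (r : Fin 2) :
    ((pairE n (i, r)) : Fin (2 * n)).val = 2 * i.val + r.val := by
  simp [pairE, finProdFinEquiv]
  omega

lemma prod_pair {n : ℕ} {M : Type*} [CommMonoid M] (F : Fin (2 * n) → M) :
    ∏ j, F j = ∏ i : Fin n, (F (pairE n (i, 0)) * F (pairE n (i, 1))) := by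
  rw [← (pairE n).prod_comp F, Fintype.prod_prod_type]
  simp [Fin.prod_univ_two]

lemma sum_pair {n : ℕ} {M : Type*} [AddCommMonoid M] (F : Fin (2 * n) → M) :
    ∑ j, F j = ∑ i : Fin n, (F (pairE n (i, 0)) + F (pairE n (i, 1))) := by
  rw [← (pairE n).sum_comp F, Fintype.sum_prod_type]
  simp [Fin.sum_univ_two]

lemma pairE_val0 {n : ℕ} (i : Fin n) : ((pairE n (i, 0)) : Fin (2 * n)).val = 2 * i.val := by
  simpa using pairE_val i 0

lemma pairE_val1 {n : ℕ} (i : Fin n) : ((pairE n (i, 1)) : Fin (2 * n)).val = 2 * i.val + 1 := by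
  simpa using pairE_val i 1

lemma fin_half0 {n : ℕ} (i : Fin n) (h : 2 * i.val / 2 < n) : (⟨2 * i.val / 2, h⟩ : Fin n) = i :=
  Fin.ext (show 2 * i.val / 2 = i.val by omega)

lemma fin_half1 {n : ℕ} (i : Fin n) (h : (2 * i.val + 1) / 2 < n) :
    (⟨(2 * i.val + 1) / 2, h⟩ : Fin n) = i :=
  Fin.ext (show (2 * i.val + 1) / 2 = i.val by omega)

lemma realCoordC_pair0 {n : ℕ} (i : Fin n) (w : Fin n → ℂ) :
    realCoordC (pairE n (i, 0)) w = ((w i).re : ℂ) := by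
  simp only [realCoordC, pairE_val0]
  rw [if_pos (by omega)]
  simp only [fin_half0]

lemma realCoordC_pair1 {n : ℕ} (i : Fin n) (w : Fin n → ℂ) :
    realCoordC (pairE n (i, 1)) w = ((w i).im : ℂ) := by
  simp only [realCoordC, pairE_val1]
  rw [if_neg (by omega)]
  simp only [fin_half1]

lemma coordDir_pair0 {n : ℕ} (i : Fin n) : coordDir (pairE n (i, 0)) = Pi.single i 1 := by
  simp only [coordDir, pairE_val0]
  rw [if_pos (by omega)]
  simp only [fin_half0]

lemma coordDir_pair1 {n : ℕ} (i : Fin n) : coordDir (pairE n (i, 1)) = Pi.single i Complex.I := by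
  simp only [coordDir, pairE_val1]
  rw [if_neg (by omega)]
  simp only [fin_half1]

lemma bergK_mul {n : ℕ} (w : Fin n → ℂ) :
    bergK 0 w * bergK w 0 = ∏ i, (Real.exp (-π * Complex.normSq (w i)) : ℂ) := by
  rw [bergK, bergK, ← Complex.exp_add]
  have he : (-((π : ℂ) / 2) * ∑ j, ((Complex.normSq ((0 : Fin n → ℂ) j) : ℂ)
        + (Complex.normSq (w j) : ℂ) - 2 * (0 : Fin n → ℂ) j * (starRingEnd ℂ) (w j)))
      + (-((π : ℂ) / 2) * ∑ j, ((Complex.normSq (w j) : ℂ)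
        + (Complex.normSq ((0 : Fin n → ℂ) j) : ℂ)
        - 2 * w j * (starRingEnd ℂ) ((0 : Fin n → ℂ) j)))
      = ∑ j, (-(π : ℂ) * (Complex.normSq (w j) : ℂ)) := by
    simp only [Pi.zero_apply, map_zero, Complex.normSq_zero, Complex.ofReal_zero, mul_zero,
      zero_mul, zero_add, add_zero, sub_zero]
    have hc : ∀ S : ℂ, -((π:ℂ)/2) * S + -((π:ℂ)/2) * S = -(π:ℂ) * S := fun S => by ring
    rw [hc, Finset.mul_sum]
  rw [he, Complex.exp_sum]
  refine Finset.prod_congr rfl fun j _ => ?_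
  rw [show (-(π:ℂ) * (Complex.normSq (w j) : ℂ)) = ((-π * Complex.normSq (w j) : ℝ) : ℂ) by
    push_cast; ring, Complex.ofReal_exp]

lemma berg_integral {n : ℕ} (α : Fin (2 * n) → ℕ) :
    (∫ w : Fin n → ℂ, bergK 0 w * (∏ j, realCoordC j w ^ α j) * bergK w 0)
    = ∏ j, ((∫ x : ℝ, x ^ α j * Real.exp (-π * x ^ 2) : ℝ) : ℂ) := by
  have step1 : ∀ w : Fin n → ℂ, bergK 0 w * (∏ j, realCoordC j w ^ α j) * bergK w 0
      = ∏ i : Fin n, (((w i).re : ℂ) ^ α (pairE n (i, 0)) * ((w i).im : ℂ) ^ α (pairE n (i, 1))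
          * (Real.exp (-π * Complex.normSq (w i)) : ℂ)) := by
    intro w
    have h1 : bergK 0 w * (∏ j, realCoordC j w ^ α j) * bergK w 0
        = (∏ j, realCoordC j w ^ α j) * (bergK 0 w * bergK w 0) := by ring
    rw [h1, bergK_mul, prod_pair (fun j => realCoordC j w ^ α j), ← Finset.prod_mul_distrib]
    refine Finset.prod_congr rfl fun i _ => ?_
    rw [realCoordC_pair0, realCoordC_pair1]
  simp only [step1]
  rw [MeasureTheory.integral_fintype_prod_volume_eq_prod (f := fun (i : Fin n) (z : ℂ) =>
    ((z.re : ℂ) ^ α (pairE n (i, 0)) * (z.im : ℂ) ^ α (pairE n (i, 1))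
      * (Real.exp (-π * Complex.normSq z) : ℂ)))]
  rw [prod_pair (fun j => ((∫ x : ℝ, x ^ α j * Real.exp (-π * x ^ 2) : ℝ) : ℂ))]
  exact Finset.prod_congr rfl fun i _ => intC _ _

lemma diffAt_fderiv_apply {n : ℕ} {h : (Fin n → ℂ) → ℂ} (hh : ContDiff ℝ (⊤ : ℕ∞) h)
    (u : Fin n → ℂ) : DifferentiableAt ℝ (fun z => fderiv ℝ h z u) 0 :=
  ((ContinuousLinearMap.apply ℝ ℂ u).differentiable.comp
    ((hh.fderiv_right (m := 1) (WithTop.coe_le_coe.mpr le_top)).differentiable one_ne_zero)).differentiableAt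

lemma sndDeriv {n : ℕ} {h : (Fin n → ℂ) → ℂ} (hh : ContDiff ℝ (⊤ : ℕ∞) h) (u v : Fin n → ℂ) :
    fderiv ℝ (fun z => fderiv ℝ h z u) 0 v = fderiv ℝ (fderiv ℝ h) 0 v u := by
  have hd : DifferentiableAt ℝ (fderiv ℝ h) 0 :=
    ((hh.fderiv_right (m := 1) (WithTop.coe_le_coe.mpr le_top)).differentiable one_ne_zero).differentiableAt
  have hc : HasFDerivAt (fun z => fderiv ℝ h z u)
      ((ContinuousLinearMap.apply ℝ ℂ u).comp (fderiv ℝ (fderiv ℝ h) 0)) 0 :=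
    (ContinuousLinearMap.apply ℝ ℂ u).hasFDerivAt.comp 0 hd.hasFDerivAt
  rw [hc.fderiv]
  rfl

lemma wirt {n : ℕ} {h : (Fin n → ℂ) → ℂ} (hh : ContDiff ℝ (⊤ : ℕ∞) h) (i : Fin n) :
    wirtingerD i (wirtingerDBar i h) 0
      = (1/4 : ℂ) * (fderiv ℝ (fderiv ℝ h) 0 (Pi.single i 1) (Pi.single i 1)
          + fderiv ℝ (fderiv ℝ h) 0 (Pi.single i Complex.I) (Pi.single i Complex.I)) := by
  have hA := diffAt_fderiv_apply hh (Pi.single i (1:ℂ))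
  have hB := diffAt_fderiv_apply hh (Pi.single i Complex.I)
  have hgfun : wirtingerDBar i h = fun z => (1/2 : ℂ) *
      (fderiv ℝ h z (Pi.single i 1) + Complex.I * fderiv ℝ h z (Pi.single i Complex.I)) := rfl
  have hD : ∀ w : Fin n → ℂ, fderiv ℝ (fun z => (1/2 : ℂ) *
      (fderiv ℝ h z (Pi.single i 1) + Complex.I * fderiv ℝ h z (Pi.single i Complex.I))) 0 w
      = (1/2 : ℂ) * (fderiv ℝ (fderiv ℝ h) 0 w (Pi.single i 1)
          + Complex.I * fderiv ℝ (fderiv ℝ h) 0 w (Pi.single i Complex.I)) := by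
    intro w
    rw [fderiv_const_mul (hA.fun_add (hB.const_mul Complex.I)) ((1:ℂ)/2)]
    rw [ContinuousLinearMap.smul_apply, fderiv_fun_add hA (hB.const_mul Complex.I),
      ContinuousLinearMap.add_apply, fderiv_const_mul hB Complex.I,
      ContinuousLinearMap.smul_apply]
    rw [sndDeriv hh, sndDeriv hh]
    simp [smul_eq_mul]
  have hsy : fderiv ℝ (fderiv ℝ h) 0 (Pi.single i (1:ℂ)) (Pi.single i Complex.I)
      = fderiv ℝ (fderiv ℝ h) 0 (Pi.single i Complex.I) (Pi.single i (1:ℂ)) :=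
    (hh.contDiffAt.isSymmSndFDerivAt (by rw [minSmoothness_of_isRCLikeNormedField]; exact WithTop.coe_le_coe.mpr le_top)).eq _ _
  rw [wirtingerD, hgfun, hD, hD, hsy]
  have hI := Complex.I_mul_I
  set a := fderiv ℝ (fderiv ℝ h) 0 (Pi.single i (1:ℂ)) (Pi.single i (1:ℂ))
  set b := fderiv ℝ (fderiv ℝ h) 0 (Pi.single i Complex.I) (Pi.single i (1:ℂ))
  set c := fderiv ℝ (fderiv ℝ h) 0 (Pi.single i Complex.I) (Pi.single i Complex.I)
  linear_combination (-(1/4 : ℂ) * c) * hI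

lemma foldr_id {A : Type*} (l : List (A → A)) (h : ∀ g ∈ l, g = id) :
    l.foldr (· ∘ ·) id = id := by
  induction l with
  | nil => rfl
  | cons a t ih =>
    rw [List.foldr_cons, h a List.mem_cons_self,
      ih fun g hg => h g (List.mem_cons_of_mem _ hg)]
    rfl

lemma foldr_single {A : Type*} {m : ℕ} (F : Fin m → (A → A)) (j : Fin m)
    (h : ∀ k, k ≠ j → F k = id) : (List.ofFn F).foldr (· ∘ ·) id = F j := by
  induction m with
  | zero => exact j.elim0
  | succ m ih =>
    rw [List.ofFn_succ, List.foldr_cons]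
    rcases Fin.eq_zero_or_eq_succ j with h0 | ⟨i, rfl⟩
    · subst h0
      rw [foldr_id _ fun g hg => by
        obtain ⟨k, rfl⟩ := List.mem_ofFn.mp hg
        exact h _ (Fin.succ_ne_zero k)]
      rfl
    · rw [h 0 (Fin.succ_ne_zero i).symm,
        ih (fun k => F k.succ) i (fun k hk => h k.succ (by simpa using hk))]
      rfl

lemma iterD_single2 {n : ℕ} (j : Fin (2 * n)) (h : (Fin n → ℂ) → ℂ) :
    iterD (Pi.single j 2) h
      = fun z => fderiv ℝ (fun y => fderiv ℝ h y (coordDir j)) z (coordDir j) := by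
  rw [iterD, foldr_single _ j fun k hk => by rw [Pi.single_eq_of_ne hk]; rfl]
  rw [Pi.single_eq_same]
  rfl

end Aux

/-- For smooth `h : ℝ^{2n} → ℂ`,
`Σ_{|α|=2} ∂^α h(0) (1/α!) ∫ 𝒫(0,w) W^α 𝒫(w,0) dW = (1/π) Σ_i ∂²h/∂z_i∂z̄_i(0)`. -/
theorem bergK_second_order_term {n : ℕ} (h : (Fin n → ℂ) → ℂ) (hh : ContDiff ℝ (⊤ : ℕ∞) h) :
    (∑ α ∈ Finset.Nat.antidiagonalTuple (2 * n) 2,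
      iterD α h 0 * (1 / ((∏ j, Nat.factorial (α j) : ℕ) : ℂ)) *
        ∫ w : Fin n → ℂ, bergK 0 w * (∏ j, realCoordC j w ^ α j) * bergK w 0)
      = (1 / (Real.pi : ℂ)) * ∑ i, wirtingerD i (wirtingerDBar i h) 0 := by
  classical
  have hπ : (Real.pi : ℂ) ≠ 0 := Complex.ofReal_ne_zero.mpr Real.pi_ne_zero
  set F : (Fin (2 * n) → ℕ) → ℂ := fun α =>
    iterD α h 0 * (1 / ((∏ j, Nat.factorial (α j) : ℕ) : ℂ)) *
      ∫ w : Fin n → ℂ, bergK 0 w * (∏ j, realCoordC j w ^ α j) * bergK w 0 with hF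
  have hFval : ∀ α, F α = iterD α h 0 * (1 / ((∏ j, Nat.factorial (α j) : ℕ) : ℂ)) *
      ∏ j, ((∫ x : ℝ, x ^ α j * Real.exp (-Real.pi * x ^ 2) : ℝ) : ℂ) := by
    intro α
    rw [hF]
    simp only
    rw [berg_integral]
  have hsub : Finset.univ.image (fun j : Fin (2 * n) => Pi.single j 2)
      ⊆ Finset.Nat.antidiagonalTuple (2 * n) 2 := by
    intro α hα
    obtain ⟨j, -, rfl⟩ := Finset.mem_image.mp hα
    rw [Finset.Nat.mem_antidiagonalTuple]
    simp [Finset.sum_pi_single']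
  have hvan : ∀ α ∈ Finset.Nat.antidiagonalTuple (2 * n) 2,
      α ∉ Finset.univ.image (fun j : Fin (2 * n) => Pi.single j 2) → F α = 0 := by
    intro α hmem hnot
    have hsum := Finset.Nat.mem_antidiagonalTuple.mp hmem
    have hone : ∃ j, α j = 1 := by
      by_contra h1
      push_neg at h1
      apply hnot
      have hex : ∃ j, α j ≠ 0 := by
        by_contra h0
        push_neg at h0
        rw [Finset.sum_congr rfl fun j _ => h0 j] at hsum
        simp at hsum
      obtain ⟨j, hj⟩ := hex
      have hle : α j ≤ 2 := hsum ▸ Finset.single_le_sum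
        (f := α) (fun i _ => Nat.zero_le _) (Finset.mem_univ j)
      have hj2 : α j = 2 := by have := h1 j; omega
      have hrest : ∑ k ∈ Finset.univ.erase j, α k = 0 := by
        rw [← Finset.add_sum_erase _ α (Finset.mem_univ j), hj2] at hsum
        omega
      have hzero : ∀ k, k ≠ j → α k = 0 := fun k hk =>
        Finset.sum_eq_zero_iff.mp hrest k (Finset.mem_erase.mpr ⟨hk, Finset.mem_univ k⟩)
      refine Finset.mem_image.mpr ⟨j, Finset.mem_univ j, ?_⟩
      funext k
      by_cases hk : k = j
      · subst hk
        rw [Pi.single_eq_same, hj2]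
      · rw [Pi.single_eq_of_ne hk, hzero k hk]
    obtain ⟨j, hj1⟩ := hone
    rw [hFval]
    rw [Finset.prod_eq_zero
      (f := fun k => ((∫ x : ℝ, x ^ α k * Real.exp (-Real.pi * x ^ 2) : ℝ) : ℂ))
      (Finset.mem_univ j) (by
        show ((∫ x : ℝ, x ^ α j * Real.exp (-Real.pi * x ^ 2) : ℝ) : ℂ) = 0
        rw [hj1]
        simp only [pow_one, mom1, Complex.ofReal_zero]), mul_zero]
  rw [← Finset.sum_subset hsub hvan]
  rw [Finset.sum_image (fun x _ y _ hxy => by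
    by_contra hne
    have h2 := congrFun hxy x
    rw [Pi.single_eq_same, Pi.single_eq_of_ne hne] at h2
    exact two_ne_zero h2)]
  have hterm : ∀ j : Fin (2 * n), F (Pi.single j 2)
      = fderiv ℝ (fderiv ℝ h) 0 (coordDir j) (coordDir j)
        * ((1 / (2:ℂ)) * ((1 / (2 * Real.pi) : ℝ) : ℂ)) := by
    intro j
    rw [hFval]
    have hfact : ∏ k, Nat.factorial ((Pi.single j 2 : Fin (2 * n) → ℕ) k) = 2 := by
      rw [Finset.prod_eq_single j (fun k _ hk => by rw [Pi.single_eq_of_ne hk]; rfl)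
        (fun hj => absurd (Finset.mem_univ j) hj), Pi.single_eq_same]
      rfl
    have hprod : ∏ k, ((∫ x : ℝ, x ^ ((Pi.single j 2 : Fin (2 * n) → ℕ) k) * Real.exp (-Real.pi * x ^ 2) : ℝ) : ℂ)
        = ((1 / (2 * Real.pi) : ℝ) : ℂ) := by
      rw [Finset.prod_eq_single j
        (fun k _ hk => by rw [Pi.single_eq_of_ne hk]; simp only [pow_zero, one_mul, mom0, Complex.ofReal_one])
        (fun hj => absurd (Finset.mem_univ j) hj), Pi.single_eq_same, mom2]
    have hit : iterD (Pi.single j 2) h 0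
        = fderiv ℝ (fderiv ℝ h) 0 (coordDir j) (coordDir j) := by
      rw [iterD_single2]
      exact sndDeriv hh _ _
    rw [hit, hfact, hprod]
    push_cast
    ring
  rw [Finset.sum_congr rfl fun j _ => hterm j]
  rw [sum_pair (fun j => fderiv ℝ (fderiv ℝ h) 0 (coordDir j) (coordDir j)
    * ((1 / (2:ℂ)) * ((1 / (2 * Real.pi) : ℝ) : ℂ)))]
  simp only [coordDir_pair0, coordDir_pair1]
  rw [show (∑ i, wirtingerD i (wirtingerDBar i h) 0)
      = ∑ i : Fin n, (1/4 : ℂ) * (fderiv ℝ (fderiv ℝ h) 0 (Pi.single i 1) (Pi.single i 1)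
          + fderiv ℝ (fderiv ℝ h) 0 (Pi.single i Complex.I) (Pi.single i Complex.I))
    from Finset.sum_congr rfl fun i _ => wirt hh i]
  rw [Finset.mul_sum]
  refine Finset.sum_congr rfl fun i _ => ?_
  set a := fderiv ℝ (fderiv ℝ h) 0 (Pi.single i (1:ℂ)) (Pi.single i (1:ℂ))
  set c := fderiv ℝ (fderiv ℝ h) 0 (Pi.single i Complex.I) (Pi.single i Complex.I)
  have hK : ((1:ℂ)/2) * ((1 / (2 * Real.pi) : ℝ) : ℂ) = 1/(Real.pi:ℂ) * (1/4) := by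
    push_cast
    field_simp
    ring
  rw [hK]
  ring
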